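/- The implementation A has a helping supervalent finite execution, i.e., a supervalent execution α such that for every competitors-only extension β of α, the execution αβp (β followed by the next step of the referee p) is closed. -/

import Mathlib

set_option autoImplicit false

/-! ## Base objects and primitives -/

/-- A base object: a shared-memory object accessed via atomic primitives.
Responses of primitives are encoded as lists of naturals. -/
structure BaseObject : Type 1 where
  State : Type
  init : State
  Prim : Type
  apply : Prim → State → State × List ℕ

/-- A base object has *interfering* primitives if at any state, the application of
any pair of primitives either commutes or one overwrites the other. -/
def Interfering (B : BaseObject) : Prop :=
  ∀ (f g : B.Prim) (s : B.State),
    (B.apply g (B.apply f s).1).1 = (B.apply f (B.apply g s).1).1 ∨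
    (B.apply f (B.apply g s).1).1 = (B.apply f s).1 ∨
    (B.apply g (B.apply f s).1).1 = (B.apply g s).1

/-- A read/write register: primitive `some v` writes `v`, primitive `none` reads. -/
def RWRegister : BaseObject where
  State := ℕ
  init := 0
  Prim := Option ℕ
  apply := fun p s =>
    match p with
    | some v => (v, [])
    | none => (s, [s])

/-- A `w`-window register stores the sequence of the last `w` values written to it;
`some v` appends `v` (dropping the oldest value if the length exceeds `w`),
`none` reads the stored sequence. -/
def WindowRegister (w : ℕ) : BaseObject where
  State := List ℕ
  init := []
  Prim := Option ℕ
  apply := fun p s =>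
    match p with
    | some v => ((s ++ [v]).drop (s.length + 1 - w), [])
    | none => (s, s)

/-- A test&set object: `T&S()` atomically sets the bit and returns the previous value. -/
def TestAndSet : BaseObject where
  State := Bool
  init := false
  Prim := Unit
  apply := fun _ s => (true, [if s then 1 else 0])

/-! ## Sequential specifications -/

/-- A (possibly nondeterministic) sequential specification for `n` processes.
`δ s i op s' r` holds if process `i` invoking `op` in state `s` may move the object
to state `s'` returning `r`.  `allowed i hist op` says whether process `i`, having
already invoked the operations `hist`, may invoke `op` (used to express one-shot
objects and the referee/competitor roles). -/
structure Spec (n : ℕ) : Type 1 where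
  Op : Type
  Res : Type
  State : Type
  init : State
  δ : State → Fin n → Op → State → Res → Prop
  allowed : Fin n → List Op → Op → Bool

/-- Valid sequential executions of a specification, starting at a given state. -/
inductive SeqRun {n : ℕ} (S : Spec n) : S.State → List (Fin n × S.Op × S.Res) → Prop
  | nil (s : S.State) : SeqRun S s []
  | cons {s : S.State} {i : Fin n} {op : S.Op} {s' : S.State} {r : S.Res}
      {l : List (Fin n × S.Op × S.Res)} :
      S.δ s i op s' r → SeqRun S s' l → SeqRun S s ((i, op, r) :: l)

/-! ## Implementations, configurations and executions -/

/-- Events of an execution: high-level invocations/responses and primitive steps. -/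
inductive Event (n : ℕ) (S : Spec n) : Type
  | inv (i : Fin n) (op : S.Op)
  | res (i : Fin n) (r : S.Res)
  | step (i : Fin n)

/-- The process performing an event. -/
def Event.proc {n : ℕ} {S : Spec n} : Event n S → Fin n
  | .inv i _ => i
  | .res i _ => i
  | .step i => i

/-- An implementation of the high-level object `S` for `n` processes from base objects
`M o`, `o : ι`: a deterministic state machine per process.  In local state `ℓ`,
process `i`'s next primitive step applies `prim i ℓ` to base object `obj i ℓ` and
updates the local state with the response via `updL`; `ret i ℓ` is the response of the
current high-level operation once it is ready. -/
structure Impl (n : ℕ) (S : Spec n) (ι : Type) (M : ι → BaseObject) : Type 1 where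
  Local : Fin n → Type
  initL : ∀ i, Local i
  invokeL : ∀ i, S.Op → Local i → Local i
  obj : ∀ i, Local i → ι
  prim : ∀ i (ℓ : Local i), (M (obj i ℓ)).Prim
  updL : ∀ i, Local i → List ℕ → Local i
  ret : ∀ i, Local i → Option S.Res

/-- A configuration: states of all base objects and all processes
(local state, pending operation, history of invoked operations). -/
structure Config {n : ℕ} {S : Spec n} {ι : Type} {M : ι → BaseObject}
    (A : Impl n S ι M) : Type where
  mem : ∀ o, (M o).State
  loc : ∀ i, A.Local i
  pend : Fin n → Option S.Op
  hist : Fin n → List S.Op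

open Classical in
/-- Update the state of one base object in the memory. -/
noncomputable def updMem {ι : Type} {M : ι → BaseObject}
    (mem : ∀ o, (M o).State) (o : ι) (s : (M o).State) : ∀ o', (M o').State :=
  fun o' =>
    if h : o' = o then cast (congrArg (fun x => (M x).State) h).symm s else mem o'

open Classical in
/-- The (deterministic) transition of a configuration by an event; `none` if the event
is not enabled.  An invocation requires the process to be idle and the operation to be
allowed by the specification; a primitive step requires a pending operation whose
response is not yet ready; a response requires the response to be ready. -/
noncomputable def nextConfig {n : ℕ} {S : Spec n} {ι : Type} {M : ι → BaseObject}
    (A : Impl n S ι M) (C : Config A) : Event n S → Option (Config A)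
  | .inv i op =>
    match C.pend i with
    | some _ => none
    | none =>
      if S.allowed i (C.hist i) op then
        some { C with
          pend := Function.update C.pend i (some op)
          hist := Function.update C.hist i (C.hist i ++ [op])
          loc := Function.update C.loc i (A.invokeL i op (C.loc i)) }
      else none
  | .step i =>
    match C.pend i with
    | none => none
    | some _ =>
      if A.ret i (C.loc i) = none then
        some { C with
          mem := updMem C.mem (A.obj i (C.loc i))
            ((M (A.obj i (C.loc i))).apply (A.prim i (C.loc i))
              (C.mem (A.obj i (C.loc i)))).1
          loc := Function.update C.loc i
            (A.updL i (C.loc i)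
              ((M (A.obj i (C.loc i))).apply (A.prim i (C.loc i))
                (C.mem (A.obj i (C.loc i)))).2) }
      else none
  | .res i r =>
    match C.pend i with
    | none => none
    | some _ =>
      if A.ret i (C.loc i) = some r then
        some { C with pend := Function.update C.pend i none }
      else none

/-- The initial configuration. -/
def initConfig {n : ℕ} {S : Spec n} {ι : Type} {M : ι → BaseObject}
    (A : Impl n S ι M) : Config A :=
  { mem := fun o => (M o).init
    loc := fun i => A.initL i
    pend := fun _ => none
    hist := fun _ => [] }

/-- The configuration reached by a finite sequence of events from the initial
configuration (`none` if the sequence is not a valid execution). -/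
noncomputable def execConfig {n : ℕ} {S : Spec n} {ι : Type} {M : ι → BaseObject}
    (A : Impl n S ι M) (α : List (Event n S)) : Option (Config A) :=
  α.foldlM (fun C e => nextConfig A C e) (initConfig A)

/-- `α` is a (finite) execution of the implementation `A`. -/
def IsExec {n : ℕ} {S : Spec n} {ι : Type} {M : ι → BaseObject}
    (A : Impl n S ι M) (α : List (Event n S)) : Prop :=
  (execConfig A α).isSome = true

/-- The length-`m` prefix of an infinite sequence of events. -/
def prefE {n : ℕ} {S : Spec n} (E : ℕ → Event n S) (m : ℕ) : List (Event n S) :=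
  (List.range m).map E

/-! ## Linearizability -/

/-- In execution `α`, the invocation at position `j` is matched by the response at
position `k` with output `r` (no earlier response of the same process intervening). -/
def Matches {n : ℕ} {S : Spec n} (α : List (Event n S)) (j k : ℕ) (r : S.Res) : Prop :=
  ∃ i op, α[j]? = some (Event.inv i op) ∧ α[k]? = some (Event.res i r) ∧ j < k ∧
    ∀ m, j < m → m < k → ∀ r', α[m]? ≠ some (Event.res i r')

/-- The operation invoked at position `j` precedes (returns before the invocation of)
the operation invoked at position `j'`. -/
def Precedes {n : ℕ} {S : Spec n} (α : List (Event n S)) (j j' : ℕ) : Prop :=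
  ∃ k r, Matches α j k r ∧ k < j'

/-- `σ` is a linearization of the execution `α`: a sequence of operation instances of
`α` (identified by the position of their invocation, paired with a response) that
contains every complete operation of `α` with its actual output and possibly some
pending ones, respects the real-time order of `α`, and is a valid sequential
execution of the specification. -/
structure IsLinearization {n : ℕ} (S : Spec n) (α : List (Event n S))
    (σ : List (ℕ × S.Res)) : Prop where
  inv_mem : ∀ p ∈ σ, ∃ i op, α[p.1]? = some (Event.inv i op)
  nodup : (σ.map Prod.fst).Nodup
  complete_mem : ∀ j k r, Matches α j k r → (j, r) ∈ σ
  complete_out : ∀ j k r r', Matches α j k r → (j, r') ∈ σ → r' = r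
  realtime : σ.Pairwise (fun a b => ¬ Precedes α b.1 a.1)
  valid : ∃ l : List (Fin n × S.Op × S.Res),
    List.Forall₂ (fun (p : ℕ × S.Res) (e : Fin n × S.Op × S.Res) =>
      α[p.1]? = some (Event.inv e.1 e.2.1) ∧ p.2 = e.2.2) σ l ∧
    SeqRun S S.init l

/-- `L` is a linearization function for `A`: it maps every execution to a
linearization of it. -/
def IsLinFun {n : ℕ} {S : Spec n} {ι : Type} {M : ι → BaseObject}
    (A : Impl n S ι M) (L : List (Event n S) → List (ℕ × S.Res)) : Prop :=
  ∀ α, IsExec A α → IsLinearization S α (L α)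

/-- `L` is prefix-closed: the linearization of a prefix is a prefix of the
linearization of an extension. -/
def PrefixClosedLin {n : ℕ} {S : Spec n} {ι : Type} {M : ι → BaseObject}
    (A : Impl n S ι M) (L : List (Event n S) → List (ℕ × S.Res)) : Prop :=
  ∀ α β, IsExec A (α ++ β) → L α <+: L (α ++ β)

/-- `L` is subsequence-closed: the linearization of a prefix is a subsequence of the
linearization of an extension. -/
def SubseqClosedLin {n : ℕ} {S : Spec n} {ι : Type} {M : ι → BaseObject}
    (A : Impl n S ι M) (L : List (Event n S) → List (ℕ × S.Res)) : Prop :=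
  ∀ α β, IsExec A (α ++ β) → List.Sublist (L α) (L (α ++ β))

/-- Strong linearizability: there is a prefix-closed linearization function. -/
def StronglyLinearizable {n : ℕ} {S : Spec n} {ι : Type} {M : ι → BaseObject}
    (A : Impl n S ι M) : Prop :=
  ∃ L, IsLinFun A L ∧ PrefixClosedLin A L

/-- Decisive linearizability: there is a subsequence-closed linearization function. -/
def DecisivelyLinearizable {n : ℕ} {S : Spec n} {ι : Type} {M : ι → BaseObject}
    (A : Impl n S ι M) : Prop :=
  ∃ L, IsLinFun A L ∧ SubseqClosedLin A L

/-! ## Progress conditions -/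

/-- Wait-freedom: in every infinite execution, a process that takes infinitely many
primitive steps completes infinitely many operations. -/
def WaitFree {n : ℕ} {S : Spec n} {ι : Type} {M : ι → BaseObject}
    (A : Impl n S ι M) : Prop :=
  ∀ E : ℕ → Event n S, (∀ m, IsExec A (prefE E m)) →
    ∀ i : Fin n, (∀ m, ∃ m', m ≤ m' ∧ E m' = Event.step i) →
      ∀ m, ∃ m', m ≤ m' ∧ ∃ r, E m' = Event.res i r

/-- Lock-freedom: in every infinite execution, infinitely many operations complete. -/
def LockFree {n : ℕ} {S : Spec n} {ι : Type} {M : ι → BaseObject}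
    (A : Impl n S ι M) : Prop :=
  ∀ E : ℕ → Event n S, (∀ m, IsExec A (prefE E m)) →
    ∀ m, ∃ m', m ≤ m' ∧ ∃ i r, E m' = Event.res i r

/-! ## High-level object specifications -/

/-- Queue: operation `some v` is `enqueue(v)` (returning `none`), operation `none` is
`dequeue()`, returning the oldest enqueued value not yet dequeued (`some v`) or
`none` (empty). -/
def QueueSpec (n : ℕ) : Spec n where
  Op := Option ℕ
  Res := Option ℕ
  State := List ℕ
  init := []
  δ := fun s _ op s' r =>
    (∃ v, op = some v ∧ s' = s ++ [v] ∧ r = none) ∨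
    (op = none ∧ ((s = [] ∧ s' = [] ∧ r = none) ∨ ∃ v t, s = v :: t ∧ s' = t ∧ r = some v))
  allowed := fun _ _ _ => true

/-- Stack: operation `some v` is `push(v)` (returning `none`), operation `none` is
`pop()`, returning the most recently pushed value not yet popped (`some v`) or
`none` (empty). -/
def StackSpec (n : ℕ) : Spec n where
  Op := Option ℕ
  Res := Option ℕ
  State := List ℕ
  init := []
  δ := fun s _ op s' r =>
    (∃ v, op = some v ∧ s' = v :: s ∧ r = none) ∨
    (op = none ∧ ((s = [] ∧ s' = [] ∧ r = none) ∨ ∃ v t, s = v :: t ∧ s' = t ∧ r = some v))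
  allowed := fun _ _ _ => true

/-- Operations of the (one-shot or long-lived) contest objects. -/
inductive ContestOp : Type
  | compete
  | decide

/-- The one-shot contest object for `n` processes: each competitor `p_1, …, p_{n-1}`
may invoke `compete()` once, which always returns `true`; the referee `p_0` may invoke
`decide()` once, which returns the index of the first process that executed
`compete()` (`Sum.inr i`) or `false` (`Sum.inl false`) if there is no such operation. -/
def ContestSpec (n : ℕ) : Spec n where
  Op := ContestOp
  Res := Bool ⊕ ℕ
  State := Option (Fin n) × Bool
  init := (none, false)
  δ := fun s i op s' r =>
    (op = ContestOp.compete ∧ i.val ≠ 0 ∧ r = Sum.inl true ∧ s'.2 = s.2 ∧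
      s'.1 = (match s.1 with | some j => some j | none => some i)) ∨
    (op = ContestOp.decide ∧ i.val = 0 ∧ s.2 = false ∧ s' = (s.1, true) ∧
      r = (match s.1 with | some j => Sum.inr j.val | none => Sum.inl false))
  allowed := fun i hist op =>
    hist.isEmpty &&
      (match op with
       | ContestOp.compete => i.val != 0
       | ContestOp.decide => i.val == 0)

/-- The long-lived contest object for `n` processes: each competitor `p_1, …, p_{n-1}`
may invoke `compete()` any number of times (returning nothing, i.e. `none`); the
referee `p_0` may invoke `decide()` at most once, which returns `some x` for some
integer `x` such that every competitor has executed at most `x` operations so far. -/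
def LLContestSpec (n : ℕ) : Spec n where
  Op := ContestOp
  Res := Option ℕ
  State := (Fin n → ℕ) × Bool
  init := (fun _ => 0, false)
  δ := fun s i op s' r =>
    (op = ContestOp.compete ∧ i.val ≠ 0 ∧
      s' = (Function.update s.1 i (s.1 i + 1), s.2) ∧ r = none) ∨
    (op = ContestOp.decide ∧ i.val = 0 ∧ s.2 = false ∧ s'.2 = true ∧ s'.1 = s.1 ∧
      ∃ x : ℕ, r = some x ∧ ∀ j : Fin n, j.val ≠ 0 → s.1 j ≤ x)
  allowed := fun i hist op =>
    match op with
    | ContestOp.compete => i.val != 0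
    | ContestOp.decide => (i.val == 0) && hist.isEmpty

/-- Counter: operation `true` is `increment()` (returning `none`), operation `false`
is `read()`, returning the number of increments so far. -/
def CounterSpec (n : ℕ) : Spec n where
  Op := Bool
  Res := Option ℕ
  State := ℕ
  init := 0
  δ := fun s _ op s' r =>
    (op = true ∧ s' = s + 1 ∧ r = none) ∨ (op = false ∧ s' = s ∧ r = some s)
  allowed := fun _ _ _ => true

/-- Max register: operation `some v` is `maxWrite(v)` (returning `none`), operation
`none` is `maxRead()`, returning the largest value written so far. -/
def MaxRegSpec (n : ℕ) : Spec n where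
  Op := Option ℕ
  Res := Option ℕ
  State := ℕ
  init := 0
  δ := fun s _ op s' r =>
    (∃ v, op = some v ∧ s' = max s v ∧ r = none) ∨ (op = none ∧ s' = s ∧ r = some s)
  allowed := fun _ _ _ => true

/-- Snapshot with `n` components: operation `Sum.inl (j, v)` atomically updates
component `j` to `v` (returning `none`); operation `Sum.inr ()` is `scan()`,
atomically returning all components. -/
def SnapshotSpec (n : ℕ) : Spec n where
  Op := (Fin n × ℕ) ⊕ Unit
  Res := Option (Fin n → ℕ)
  State := Fin n → ℕ
  init := fun _ => 0
  δ := fun s _ op s' r =>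
    (∃ j v, op = Sum.inl (j, v) ∧ s' = Function.update s j v ∧ r = none) ∨
    (op = Sum.inr () ∧ s' = s ∧ r = some s)
  allowed := fun _ _ _ => true

/-- Fetch&increment: atomically returns the current value and increments it. -/
def FetchIncSpec (n : ℕ) : Spec n where
  Op := Unit
  Res := ℕ
  State := ℕ
  init := 0
  δ := fun s _ _ s' r => s' = s + 1 ∧ r = s
  allowed := fun _ _ _ => true

/-- Fetch&add: `fetch&add(v)` atomically returns the current value and adds `v`. -/
def FetchAddSpec (n : ℕ) : Spec n where
  Op := ℕ
  Res := ℕ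
  State := ℕ
  init := 0
  δ := fun s _ op s' r => s' = s + op ∧ r = s
  allowed := fun _ _ _ => true

/-! ## Valency machinery for the long-lived contest object -/

/-- A sequence of events involves only the competitors `p_1, …, p_{n-1}`. -/
def CompetitorsOnly {n : ℕ} {S : Spec n} (β : List (Event n S)) : Prop :=
  ∀ e ∈ β, (Event.proc e).val ≠ 0

/-- `decide()` appears in the linearization `L α` with output `x`. -/
def DecidesVal {n : ℕ}
    (L : List (Event n (LLContestSpec n)) → List (ℕ × (LLContestSpec n).Res))
    (α : List (Event n (LLContestSpec n))) (x : ℕ) : Prop :=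
  ∃ j : ℕ, ∃ i : Fin n, i.val = 0 ∧
    α[j]? = some (Event.inv i ContestOp.decide) ∧ (j, (some x : Option ℕ)) ∈ L α

/-- The competitors-valency `W(α)`: all `x` such that some finite competitors-only
extension `β` of `α` has `decide()` appearing in `L(αβ)` with output `x`. -/
def Wset {n : ℕ} {ι : Type} {M : ι → BaseObject} (A : Impl n (LLContestSpec n) ι M)
    (L : List (Event n (LLContestSpec n)) → List (ℕ × (LLContestSpec n).Res))
    (α : List (Event n (LLContestSpec n))) : Set ℕ :=
  { x | ∃ β, CompetitorsOnly β ∧ IsExec A (α ++ β) ∧ DecidesVal L (α ++ β) x }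

/-- `α` is competitors-closed: every infinite competitors-only extension of `α` has a
finite prefix `β` such that `decide()` appears in `L(αβ)`. -/
def ClosedExec {n : ℕ} {ι : Type} {M : ι → BaseObject} (A : Impl n (LLContestSpec n) ι M)
    (L : List (Event n (LLContestSpec n)) → List (ℕ × (LLContestSpec n).Res))
    (α : List (Event n (LLContestSpec n))) : Prop :=
  ∀ E : ℕ → Event n (LLContestSpec n),
    (∀ m, (Event.proc (E m)).val ≠ 0) →
    (∀ m, IsExec A (α ++ prefE E m)) →
    ∃ m x, DecidesVal L (α ++ prefE E m) x

/-- `α` is competitors-supervalent: not competitors-closed. -/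
def SupervalentExec {n : ℕ} {ι : Type} {M : ι → BaseObject}
    (A : Impl n (LLContestSpec n) ι M)
    (L : List (Event n (LLContestSpec n)) → List (ℕ × (LLContestSpec n).Res))
    (α : List (Event n (LLContestSpec n))) : Prop :=
  ¬ ClosedExec A L α

/-- The next event of process `r` in configuration `C` of an implementation of the
long-lived contest object: invoke its (unique) operation if idle, respond if the
response is ready, and otherwise take its next primitive step. -/
noncomputable def llNextEvent {n : ℕ} {ι : Type} {M : ι → BaseObject}
    (A : Impl n (LLContestSpec n) ι M) (C : Config A) (r : Fin n) :
    Event n (LLContestSpec n) :=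
  match C.pend r with
  | none => Event.inv r (if r.val = 0 then ContestOp.decide else ContestOp.compete)
  | some _ =>
    match A.ret r (C.loc r) with
    | some v => Event.res r v
    | none => Event.step r

/-- `α` extended by the next step of process `r` (written `αr` in the paper);
`α` is left unchanged if `r` has no enabled next step. -/
noncomputable def sched1 {n : ℕ} {ι : Type} {M : ι → BaseObject}
    (A : Impl n (LLContestSpec n) ι M) (α : List (Event n (LLContestSpec n)))
    (r : Fin n) : List (Event n (LLContestSpec n)) :=
  match execConfig A α with
  | none => α
  | some C =>
    match nextConfig A C (llNextEvent A C r) with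
    | none => α
    | some _ => α ++ [llNextEvent A C r]

/-- `α` extended by scheduling the listed processes, each taking its next step in
order; e.g. `sched A α [q, p]` is the execution `αqp` of the paper. -/
noncomputable def sched {n : ℕ} {ι : Type} {M : ι → BaseObject}
    (A : Impl n (LLContestSpec n) ι M) :
    List (Event n (LLContestSpec n)) → List (Fin n) → List (Event n (LLContestSpec n))
  | α, [] => α
  | α, r :: rs => sched A (sched1 A α r) rs

/-- The final configurations of executions `α` and `α'` are indistinguishable to
process `r`: all base objects have the same states, and `r` is in the same state. -/
def ExecIndistTo {n : ℕ} {S : Spec n} {ι : Type} {M : ι → BaseObject}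
    (A : Impl n S ι M) (α α' : List (Event n S)) (r : Fin n) : Prop :=
  ∃ C C', execConfig A α = some C ∧ execConfig A α' = some C' ∧
    C.mem = C'.mem ∧ C.loc r = C'.loc r ∧ C.pend r = C'.pend r ∧ C.hist r = C'.hist r

/-! Suppose no supervalent execution is helping. The empty execution is supervalent, because a
competitor running solo never lets `decide()` be linearized. If `α` is supervalent and the referee
`p` has not yet responded in it, some competitors-only `β` leaves `αβp` supervalent, and the
referee's next event there cannot be its response: a completed `decide()` is linearized, which
closes the execution. After at most two such extensions the referee has taken a primitive step,
so iterating yields an infinite execution in which the referee steps infinitely often but never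
responds, contradicting wait-freedom. -/

theorem List.Forall₂.exists_of_mem_left {α β : Type*} {R : α → β → Prop} {l₁ : List α}
    {l₂ : List β} (h : List.Forall₂ R l₁ l₂) {a : α} (ha : a ∈ l₁) : ∃ b ∈ l₂, R a b := by
  induction h with
  | nil => simp at ha
  | cons hab _ ih =>
    rcases List.mem_cons.mp ha with rfl | ha
    · exact ⟨_, List.mem_cons_self, hab⟩
    · obtain ⟨b, hb, hab⟩ := ih ha
      exact ⟨b, List.mem_cons_of_mem _ hb, hab⟩

theorem exists_seq_of_forall_exists_append {α : Type*} {P : List α → Prop} {R : α → Prop}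
    (h0 : P []) (hext : ∀ l, P l → ∃ l', P (l ++ l') ∧ ∃ x ∈ l', R x) :
    ∃ E : ℕ → α, (∀ m, ∃ l, P l ∧ (List.range m).map E <+: l) ∧ ∀ m, ∃ m' ≥ m, R (E m') := by
  choose! g hgP hgR using hext
  let c : ℕ → List α := fun k => Nat.rec [] (fun _ l => l ++ g l) k
  have hc : ∀ k, c (k + 1) = c k ++ g (c k) := fun _ => rfl
  have hP : ∀ k, P (c k) := fun k => Nat.rec h0 (fun k ih => (hc k) ▸ hgP _ ih) k
  have hlen : ∀ k, k ≤ (c k).length := by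
    intro k
    induction k with
    | zero => exact Nat.zero_le _
    | succ k ih =>
      obtain ⟨x, hx, -⟩ := hgR _ (hP k)
      have := List.length_pos_of_mem hx
      rw [hc, List.length_append]
      omega
  have hmono : ∀ k k', k ≤ k' → c k <+: c k' := fun k k' h => by
    induction k', h using Nat.le_induction with
    | base => exact List.prefix_refl _
    | succ k' _ ih => exact ih.trans ⟨g (c k'), (hc k').symm⟩
  let E : ℕ → α := fun m => (c (m + 1))[m]'(hlen (m + 1))
  have hE : ∀ k m (hm : m < (c k).length), (c k)[m] = E m := by
    intro k m hm
    rcases le_total k (m + 1) with h | h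
    · exact (hmono _ _ h).getElem hm
    · exact ((hmono _ _ h).getElem (hlen (m + 1))).symm
  refine ⟨E, fun m => ⟨c m, hP m, ?_⟩, fun m => ?_⟩
  · have htake : (List.range m).map E = (c m).take m := by
      apply List.ext_getElem (by simp [hlen m])
      intro i hi _
      simp only [List.getElem_map, List.getElem_range, List.getElem_take]
      exact (hE m i (lt_of_lt_of_le (by simpa using hi) (hlen m))).symm
    exact htake ▸ List.take_prefix m (c m)
  · obtain ⟨x, hx, hRx⟩ := hgR _ (hP m)
    obtain ⟨i, hi, rfl⟩ := List.getElem_of_mem hx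
    refine ⟨(c m).length + i, le_add_right (hlen m), ?_⟩
    have hlt : (c m).length + i < (c (m + 1)).length := by simp [hc, hi]
    rw [← hE (m + 1) _ hlt]
    simpa [hc] using hRx

section Executions

variable {n : ℕ} {S : Spec n} {ι : Type} {M : ι → BaseObject} {A : Impl n S ι M}

theorem execConfig_concat (α : List (Event n S)) (e : Event n S) :
    execConfig A (α ++ [e]) = (execConfig A α).bind (nextConfig A · e) := by
  simp only [execConfig, List.foldlM_append]
  cases α.foldlM (nextConfig A) (initConfig A) <;> simp [List.foldlM]

theorem IsExec.of_prefix {α β : List (Event n S)} (h : IsExec A β) (hαβ : α <+: β) :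
    IsExec A α := by
  obtain ⟨t, rfl⟩ := hαβ
  unfold IsExec execConfig at *
  rw [List.foldlM_append] at h
  cases hα : α.foldlM (nextConfig A) (initConfig A) <;> simp_all

theorem isExec_concat {α : List (Event n S)} {C : Config A} {e : Event n S}
    (hC : execConfig A α = some C) (he : (nextConfig A C e).isSome) : IsExec A (α ++ [e]) := by
  simpa [IsExec, execConfig_concat, hC] using he

theorem exists_nextConfig_of_execConfig_concat {α : List (Event n S)} {e : Event n S}
    {C : Config A} (h : execConfig A (α ++ [e]) = some C) :
    ∃ C₀, execConfig A α = some C₀ ∧ nextConfig A C₀ e = some C := by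
  rw [execConfig_concat] at h
  exact Option.bind_eq_some_iff.mp h

theorem nextConfig_inv_eq_some {C C' : Config A} {i : Fin n} {op : S.Op}
    (h : nextConfig A C (.inv i op) = some C') :
    C.pend i = none ∧ S.allowed i (C.hist i) op = true ∧
      C' = { C with pend := Function.update C.pend i (some op),
                    hist := Function.update C.hist i (C.hist i ++ [op]),
                    loc := Function.update C.loc i (A.invokeL i op (C.loc i)) } := by
  cases hp : C.pend i <;> simp only [nextConfig, hp] at h
  · split at h
    · exact ⟨rfl, by assumption, (Option.some_inj.mp h).symm⟩
    · simp at h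
  · simp at h

theorem nextConfig_res_eq_some {C C' : Config A} {i : Fin n} {r : S.Res}
    (h : nextConfig A C (.res i r) = some C') :
    C' = { C with pend := Function.update C.pend i none } := by
  cases hp : C.pend i <;> simp only [nextConfig, hp] at h
  · simp at h
  · split at h
    · exact (Option.some_inj.mp h).symm
    · simp at h

theorem nextConfig_step_eq_some {C C' : Config A} {i : Fin n}
    (h : nextConfig A C (.step i) = some C') : C'.pend = C.pend ∧ C'.hist = C.hist := by
  cases hp : C.pend i <;> simp only [nextConfig, hp] at h
  · simp at h
  · split at h
    · cases Option.some_inj.mp h; exact ⟨rfl, rfl⟩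
    · simp at h

theorem exists_allowed_of_inv_mem {α : List (Event n S)} {i : Fin n} {op : S.Op}
    (hα : IsExec A α) (h : Event.inv i op ∈ α) : ∃ hist, S.allowed i hist op = true := by
  obtain ⟨s, t, rfl⟩ := List.append_of_mem h
  have hpre : IsExec A (s ++ [Event.inv i op]) := hα.of_prefix ⟨t, by simp⟩
  obtain ⟨C, hC⟩ := Option.isSome_iff_exists.mp hpre
  obtain ⟨C₀, -, hC₀⟩ := exists_nextConfig_of_execConfig_concat hC
  exact ⟨_, (nextConfig_inv_eq_some hC₀).2.1⟩

theorem hist_eq_toList_pend_of_forall_res_not_mem {i : Fin n} :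
    ∀ {α : List (Event n S)} {C : Config A}, execConfig A α = some C →
      (∀ r, Event.res i r ∉ α) →
      C.hist i = (C.pend i).toList ∧ ∀ op, Event.inv i op ∈ α ↔ C.pend i = some op := by
  intro α
  induction α using List.reverseRecOn with
  | nil =>
    intro C hC _
    cases Option.some_inj.mp hC
    simp [initConfig]
  | append_singleton α e ih =>
    intro C hC hres
    obtain ⟨C₀, hC₀, hnext⟩ := exists_nextConfig_of_execConfig_concat hC
    obtain ⟨hhist, hinv⟩ := ih hC₀ fun r hr => hres r (List.mem_append_left _ hr)
    cases e with
    | inv i' op' =>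
      obtain ⟨hpend, -, rfl⟩ := nextConfig_inv_eq_some hnext
      by_cases hi : i = i'
      · subst hi
        have hnil : C₀.hist i = [] := by simp [hhist, hpend]
        simp [hnil, hinv, hpend, eq_comm]
      · simp [hhist, hinv, hi]
    | res i' r =>
      have hi : i ≠ i' := by rintro rfl; exact hres r (by simp)
      cases nextConfig_res_eq_some hnext
      simp [Function.update_of_ne hi, hhist, hinv]
    | step i' =>
      obtain ⟨hpend, hhist'⟩ := nextConfig_step_eq_some hnext
      simp [hpend, hhist', hhist, hinv]

theorem mem_prefE_succ (E : ℕ → Event n S) (m : ℕ) : E m ∈ prefE E (m + 1) :=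
  List.mem_map_of_mem (List.mem_range.2 m.lt_succ_self)

theorem SeqRun.exists_δ_of_mem {s : S.State}
    {l : List (Fin n × S.Op × S.Res)} (h : SeqRun S s l) {e : Fin n × S.Op × S.Res}
    (he : e ∈ l) : ∃ s₁ s₂, S.δ s₁ e.1 e.2.1 s₂ e.2.2 := by
  induction h with
  | nil => simp at he
  | cons hδ _ ih =>
    rcases List.mem_cons.mp he with rfl | he
    · exact ⟨_, _, hδ⟩
    · exact ih he

end Executions

section Contest

variable {n : ℕ} {ι : Type} {M : ι → BaseObject} {A : Impl n (LLContestSpec n) ι M}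
  {L : List (Event n (LLContestSpec n)) → List (ℕ × (LLContestSpec n).Res)}

theorem llNextEvent_proc (C : Config A) (r : Fin n) : (llNextEvent A C r).proc = r := by
  unfold llNextEvent
  cases C.pend r
  · rfl
  · cases A.ret r (C.loc r) <;> rfl

theorem isSome_nextConfig_llNextEvent {C : Config A} {r : Fin n}
    (hall : C.pend r = none → (LLContestSpec n).allowed r (C.hist r)
      (if r.val = 0 then ContestOp.decide else ContestOp.compete) = true) :
    (nextConfig A C (llNextEvent A C r)).isSome := by
  unfold llNextEvent
  cases hp : C.pend r
  · simp [nextConfig, hp, hall hp]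
  · cases hret : A.ret r (C.loc r) <;> simp [nextConfig, hp, hret]

theorem sched1_eq_of_isSome {α : List (Event n (LLContestSpec n))} {C : Config A} {r : Fin n}
    (hC : execConfig A α = some C) (hs : (nextConfig A C (llNextEvent A C r)).isSome) :
    sched1 A α r = α ++ [llNextEvent A C r] := by
  obtain ⟨C', hC'⟩ := Option.isSome_iff_exists.mp hs
  simp only [sched1, hC, hC']

theorem eq_decide_of_allowed {i : Fin n} {hist : List ContestOp} {op : ContestOp}
    (hi : i.val = 0) (h : (LLContestSpec n).allowed i hist op = true) :
    op = ContestOp.decide := by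
  cases op
  · simp [LLContestSpec, hi] at h
  · rfl

theorem closedExec_of_decidesVal {α : List (Event n (LLContestSpec n))} {x : ℕ}
    (h : DecidesVal L α x) : ClosedExec A L α :=
  fun _ _ _ => ⟨0, x, by simpa [prefE] using h⟩

theorem exists_eq_some_of_mem_lin_decide (hLin : IsLinFun A L)
    {α : List (Event n (LLContestSpec n))} (hα : IsExec A α) {j : ℕ} {i : Fin n}
    {v : Option ℕ} (hj : α[j]? = some (Event.inv i ContestOp.decide)) (hv : (j, v) ∈ L α) :
    ∃ x, v = some x := by
  obtain ⟨l, hrel, hrun⟩ := (hLin α hα).valid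
  obtain ⟨⟨i', op, v'⟩, hmem, hinv, rfl⟩ := hrel.exists_of_mem_left hv
  obtain rfl : op = ContestOp.decide := by
    rw [hj, Option.some_inj] at hinv
    exact (Event.inv.inj hinv).2.symm
  obtain ⟨s₁, s₂, hδ | ⟨-, -, -, -, -, x, hx, -⟩⟩ := hrun.exists_δ_of_mem hmem
  · exact absurd hδ.1 ContestOp.noConfusion
  · exact ⟨x, hx⟩

theorem closedExec_of_referee_res (hLin : IsLinFun A L) {γ : List (Event n (LLContestSpec n))}
    {p : Fin n} {v : Option ℕ} (hp : p.val = 0) (hexec : IsExec A (γ ++ [Event.res p v]))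
    (hinv : Event.inv p ContestOp.decide ∈ γ) (hres : ∀ r, Event.res p r ∉ γ) :
    ClosedExec A L (γ ++ [Event.res p v]) := by
  obtain ⟨j, hj⟩ := List.mem_iff_getElem?.mp hinv
  have hjlt : j < γ.length := (List.getElem?_eq_some_iff.mp hj).1
  have hj' : (γ ++ [Event.res p v])[j]? = some (Event.inv p ContestOp.decide) := by
    rwa [List.getElem?_append_left hjlt]
  have hmatch : Matches (γ ++ [Event.res p v]) j γ.length v := by
    refine ⟨p, _, hj', List.getElem?_concat_length, hjlt, fun m _ hm r' hr' => ?_⟩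
    rw [List.getElem?_append_left hm] at hr'
    exact hres r' (List.mem_of_getElem? hr')
  have hmem := (hLin _ hexec).complete_mem _ _ _ hmatch
  obtain ⟨x, rfl⟩ := exists_eq_some_of_mem_lin_decide hLin hexec hj' hmem
  exact closedExec_of_decidesVal ⟨j, p, hp, hj', hmem⟩

theorem supervalentExec_nil {q : Fin n} (hq : q.val ≠ 0) : SupervalentExec A L [] := by
  obtain ⟨E, hpre, -⟩ := exists_seq_of_forall_exists_append (R := fun _ => True)
    (P := fun l => IsExec A l ∧ ∀ e ∈ l, e.proc = q) ⟨rfl, by simp⟩ <| by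
      rintro l ⟨hl, hq'⟩
      obtain ⟨C, hC⟩ := Option.isSome_iff_exists.mp hl
      have hs := isSome_nextConfig_llNextEvent (C := C) (r := q) fun _ => by
        simp [LLContestSpec, hq]
      refine ⟨[llNextEvent A C q], ⟨isExec_concat hC hs, ?_⟩, _, List.mem_singleton_self _, trivial⟩
      simp only [List.mem_append, List.mem_singleton]
      rintro e (he | rfl)
      exacts [hq' e he, llNextEvent_proc C q]
  have hproc : ∀ m, ∀ e ∈ prefE E m, e.proc = q := fun m e he =>
    let ⟨_, hl, hpref⟩ := hpre m; hl.2 e (hpref.subset he)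
  intro hclosed
  obtain ⟨m, x, j, i, hi, hj, -⟩ := hclosed E
    (fun m => hproc (m + 1) _ (mem_prefE_succ E m) ▸ hq)
    (fun m => let ⟨_, hl, hpref⟩ := hpre m; hl.1.of_prefix hpref)
  have hiq : i = q := hproc m _ (List.mem_of_getElem? hj)
  exact hq (hiq ▸ hi)

theorem exists_sched_referee_eq (hLin : IsLinFun A L) {γ : List (Event n (LLContestSpec n))}
    {p : Fin n} (hp : p.val = 0) (hγ : IsExec A γ) (hres : ∀ r, Event.res p r ∉ γ)
    (hsup : SupervalentExec A L (sched A γ [p])) :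
    ∃ e, sched A γ [p] = γ ++ [e] ∧ IsExec A (γ ++ [e]) ∧
      (e = Event.step p ∨ e = Event.inv p ContestOp.decide ∧ ∀ op, Event.inv p op ∉ γ) := by
  obtain ⟨C, hC⟩ := Option.isSome_iff_exists.mp hγ
  obtain ⟨hhist, hinv⟩ := hist_eq_toList_pend_of_forall_res_not_mem hC hres
  have hs : (nextConfig A C (llNextEvent A C p)).isSome :=
    isSome_nextConfig_llNextEvent fun hpend => by simp [hhist, hpend, LLContestSpec, hp]
  have hsched : sched A γ [p] = γ ++ [llNextEvent A C p] := sched1_eq_of_isSome hC hs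
  refine ⟨_, hsched, isExec_concat hC hs, ?_⟩
  unfold llNextEvent
  cases hpend : C.pend p with
  | none => exact Or.inr ⟨by simp [hp], fun op h => by simp [(hinv op).mp h] at hpend⟩
  | some op =>
    cases hret : A.ret p (C.loc p) with
    | none => exact Or.inl rfl
    | some v =>
      have hop : Event.inv p op ∈ γ := (hinv op).mpr hpend
      obtain ⟨_, hall⟩ := exists_allowed_of_inv_mem hγ hop
      obtain rfl := eq_decide_of_allowed hp hall
      have hexec := isExec_concat hC hs
      simp only [llNextEvent, hpend, hret] at hsched hexec
      exact absurd (closedExec_of_referee_res hLin hp hexec hop hres) (hsched ▸ hsup)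

def HelpingExec (A : Impl n (LLContestSpec n) ι M)
    (L : List (Event n (LLContestSpec n)) → List (ℕ × (LLContestSpec n).Res)) (p : Fin n)
    (α : List (Event n (LLContestSpec n))) : Prop :=
  SupervalentExec A L α ∧
    ∀ β, CompetitorsOnly β → IsExec A (α ++ β) → ClosedExec A L (sched A (α ++ β) [p])

theorem exists_supervalent_extension_of_not_helping (hLin : IsLinFun A L) {p : Fin n}
    (hp : p.val = 0) (hno : ∀ α, IsExec A α → ¬ HelpingExec A L p α)
    {α : List (Event n (LLContestSpec n))} (hα : IsExec A α) (hsup : SupervalentExec A L α)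
    (hres : ∀ r, Event.res p r ∉ α) :
    ∃ γ e, IsExec A (α ++ γ ++ [e]) ∧ SupervalentExec A L (α ++ γ ++ [e]) ∧
      (∀ r, Event.res p r ∉ α ++ γ ++ [e]) ∧
      (e = Event.step p ∨ e = Event.inv p ContestOp.decide ∧ ∀ op, Event.inv p op ∉ α) := by
  have hno := hno α hα
  simp only [HelpingExec, hsup, true_and, not_forall] at hno
  obtain ⟨β, hβ, hαβ, hsup'⟩ := hno
  have hresβ : ∀ r, Event.res p r ∉ α ++ β := fun r h => by
    rcases List.mem_append.mp h with h | h
    exacts [hres r h, hβ _ h hp]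
  obtain ⟨e, hsched, hexec, he⟩ := exists_sched_referee_eq hLin hp hαβ hresβ hsup'
  refine ⟨β, e, hexec, hsched ▸ hsup', ?_, he.imp_right fun he => ⟨he.1, fun op h => he.2 op ?_⟩⟩
  · rintro r h
    rcases List.mem_append.mp h with h | h
    · exact hresβ r h
    · rcases he with rfl | ⟨rfl, -⟩ <;> simp at h
  · exact List.mem_append_left _ h

theorem exists_supervalent_extension_with_referee_step (hLin : IsLinFun A L) {p : Fin n}
    (hp : p.val = 0) (hno : ∀ α, IsExec A α → ¬ HelpingExec A L p α)
    {α : List (Event n (LLContestSpec n))} (hα : IsExec A α) (hsup : SupervalentExec A L α)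
    (hres : ∀ r, Event.res p r ∉ α) :
    ∃ γ, (IsExec A (α ++ γ) ∧ SupervalentExec A L (α ++ γ) ∧ ∀ r, Event.res p r ∉ α ++ γ) ∧
      Event.step p ∈ γ := by
  obtain ⟨β, e, hexec, hsup', hres', he⟩ :=
    exists_supervalent_extension_of_not_helping hLin hp hno hα hsup hres
  rcases he with rfl | ⟨rfl, -⟩
  · refine ⟨β ++ [Event.step p], ?_, by simp⟩
    simpa only [← List.append_assoc] using ⟨hexec, hsup', hres'⟩
  obtain ⟨β', e', hexec', hsup'', hres'', he'⟩ :=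
    exists_supervalent_extension_of_not_helping hLin hp hno hexec hsup' hres'
  rcases he' with rfl | ⟨-, hnot⟩
  · refine ⟨β ++ [Event.inv p ContestOp.decide] ++ β' ++ [Event.step p], ?_, by simp⟩
    simpa only [← List.append_assoc] using ⟨hexec', hsup'', hres''⟩
  · exact absurd (by simp) (hnot ContestOp.decide)

theorem exists_helpingExec (hn : 1 < n) (hWF : WaitFree A) (hLin : IsLinFun A L) {p : Fin n}
    (hp : p.val = 0) : ∃ α, IsExec A α ∧ HelpingExec A L p α := by
  by_contra! hno
  obtain ⟨E, hpre, hsteps⟩ := exists_seq_of_forall_exists_append (R := (· = Event.step p))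
    (P := fun l => IsExec A l ∧ SupervalentExec A L l ∧ ∀ r, Event.res p r ∉ l)
    ⟨rfl, supervalentExec_nil (q := ⟨1, hn⟩) one_ne_zero, by simp⟩
    fun l ⟨hl, hsup, hres⟩ =>
      let ⟨γ, hγ, hstep⟩ := exists_supervalent_extension_with_referee_step hLin hp hno hl hsup hres
      ⟨γ, hγ, _, hstep, rfl⟩
  obtain ⟨m, -, r, hr⟩ := hWF E (fun m => let ⟨_, hl, hpref⟩ := hpre m; hl.1.of_prefix hpref) p
    hsteps 0
  obtain ⟨l, hl, hpref⟩ := hpre (m + 1)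
  exact hl.2.2 r (hr ▸ hpref.subset (mem_prefE_succ E m))

end Contest

/-- (Lemma `helping`.) Any wait-free strongly linearizable
implementation `A` of the long-lived contest object (with prefix-closed linearization
function `L`) has a helping supervalent execution: a supervalent execution `α` such
that for every competitors-only extension `β` of `α`, the execution `αβp` (extending
by the next step of the referee `p`) is closed. -/
theorem exists_helping_supervalent_execution :
    ∀ (n : ℕ) (hn : 2 ≤ n) (ι : Type) (M : ι → BaseObject)
      (A : Impl n (LLContestSpec n) ι M)
      (L : List (Event n (LLContestSpec n)) → List (ℕ × (LLContestSpec n).Res)),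
      WaitFree A → IsLinFun A L → PrefixClosedLin A L →
      ∃ α : List (Event n (LLContestSpec n)), IsExec A α ∧ SupervalentExec A L α ∧
        ∀ β, CompetitorsOnly β → IsExec A (α ++ β) →
          ClosedExec A L (sched A (α ++ β) [(⟨0, by omega⟩ : Fin n)]) := by
  intro n hn ι M A L hWF hLin _
  exact exists_helpingExec hn hWF hLin rfl
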